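/- arXiv:2106.12846 — 4 statements merged into one kernel-verified Lean document; each statement's English description precedes it below -/
import Mathlib

section
/- Let f : (Fin n → FreeMonoid α) → FreeMonoid α be congruence preserving and let a ∈ α. For all tuples u, v, w : Fin n → FreeMonoid α such that for every i one has |v i|_a = |u i|_a and |w i| − |w i|_a = |u i| − |u i|_a, it holds that |f u| = |f v|_a + (|f w| − |f w|_a). -/
/-- `f` is congruence preserving on the free monoid. -/
def IsCP {α : Type*} {n : ℕ} (f : (Fin n → FreeMonoid α) → FreeMonoid α) : Prop :=
  ∀ c : Con (FreeMonoid α), ∀ u v : Fin n → FreeMonoid α,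
    (∀ i, c (u i) (v i)) → c (f u) (f v)

/-- Number of occurrences of the letter `a` in the word `w`. -/
def countLetter {α : Type*} [DecidableEq α] (a : α) (w : FreeMonoid α) : ℕ :=
  (FreeMonoid.toList w).count a

/-!
Every monoid morphism `φ` out of the free monoid has a kernel congruence, so a congruence
preserving function respects `φ`. Applied to the morphisms counting the letters equal to `a`
and the letters different from `a`, this gives both summands of the length of `f u`.
-/

section

variable {α : Type*} [DecidableEq α]

theorem countLetter_le_length (a : α) (w : FreeMonoid α) : countLetter a w ≤ w.length :=
  List.count_le_length

theorem length_sub_countLetter (a : α) (w : FreeMonoid α) :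
    w.length - countLetter a w = w.toList.countP (· ≠ a) := by
  rw [FreeMonoid.length, List.length_eq_countP_add_countP (· == a), countLetter, List.count,
    Nat.add_sub_cancel_left]
  simp

end

namespace IsCP

variable {α : Type*} {n : ℕ} {f : (Fin n → FreeMonoid α) → FreeMonoid α}
  {u v : Fin n → FreeMonoid α}

theorem map_eq_map {M : Type*} [MulOneClass M] (hf : IsCP f) (φ : FreeMonoid α →* M)
    (h : ∀ i, φ (u i) = φ (v i)) : φ (f u) = φ (f v) :=
  hf (Con.ker φ) u v h

theorem countP_eq (hf : IsCP f) (p : α → Prop) [DecidablePred p]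
    (h : ∀ i, (u i).toList.countP p = (v i).toList.countP p) :
    (f u).toList.countP p = (f v).toList.countP p :=
  congrArg Multiplicative.toAdd <|
    hf.map_eq_map (FreeMonoid.countP p) fun i => congrArg Multiplicative.ofAdd (h i)

theorem countLetter_eq [DecidableEq α] (hf : IsCP f) (a : α)
    (h : ∀ i, countLetter a (u i) = countLetter a (v i)) :
    countLetter a (f u) = countLetter a (f v) :=
  hf.countP_eq (· = a) h

theorem length_sub_countLetter_eq [DecidableEq α] (hf : IsCP f) (a : α)
    (h : ∀ i, (u i).length - countLetter a (u i) = (v i).length - countLetter a (v i)) :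
    (f u).length - countLetter a (f u) = (f v).length - countLetter a (f v) := by
  simp only [length_sub_countLetter] at h ⊢
  exact hf.countP_eq _ h

end IsCP

/-- The length of the value of a CP function decomposes as the sum of the `a`-count
contribution and the non-`a` contribution. -/
theorem cp_length_decomposition {α : Type*} [DecidableEq α] {n : ℕ}
    (f : (Fin n → FreeMonoid α) → FreeMonoid α) (hf : IsCP f) (a : α)
    (u v w : Fin n → FreeMonoid α)
    (hv : ∀ i, countLetter a (v i) = countLetter a (u i))
    (hw : ∀ i, (w i).length - countLetter a (w i) = (u i).length - countLetter a (u i)) :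
    (f u).length = countLetter a (f v) + ((f w).length - countLetter a (f w)) := by
  have hcount := hf.countLetter_eq a fun i => (hv i).symm
  have hrest := hf.length_sub_countLetter_eq a fun i => (hw i).symm
  have hle := countLetter_le_length a (f u)
  omega
end

section
/- Let a, b be distinct letters of α, let n > 1, let τ = a^n · b · a · b^n, and let v be a word with |v| < |τ|. If t ~_{τ,v} t' and |t| < |τ|, then t = t' if and only if |t| = |t'|. -/
/-!
Orient the relation as the rewriting system `τ → v`, which strictly shortens words. For `n > 1`
the word `τ = aⁿbabⁿ` is unbordered (no proper nonempty prefix is also a suffix), so two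
occurrences of `τ` in a word either coincide or are disjoint; disjoint rewrites commute, hence
the system is locally confluent and, by Church–Rosser, congruent words rewrite to a common word.
A word shorter than `τ` admits no rewrite, so `t'` rewrites to `t`, and if `t' ≠ t` this takes
at least one step, making `t'` longer than `t`.
-/

open Relation

section Rewriting

variable {M : Type*} [Monoid M]

def RewriteStep (l r : M) (x y : M) : Prop :=
  ∃ s t, x = s * l * t ∧ y = s * r * t

variable {l r : M}

theorem RewriteStep.mul_mul {x y : M} (h : RewriteStep l r x y) (s t : M) :
    RewriteStep l r (s * x * t) (s * y * t) := by
  obtain ⟨s', t', rfl, rfl⟩ := h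
  exact ⟨s * s', t' * t, by simp only [mul_assoc], by simp only [mul_assoc]⟩

theorem eqvGen_rewriteStep_mul_mul {x y : M} (h : EqvGen (RewriteStep l r) x y) (s t : M) :
    EqvGen (RewriteStep l r) (s * x * t) (s * y * t) := by
  induction h with
  | rel x y h => exact .rel _ _ (h.mul_mul s t)
  | refl x => exact .refl _
  | symm x y _ ih => exact .symm _ _ ih
  | trans x y z _ _ ihxy ihyz => exact .trans _ _ _ ihxy ihyz

theorem conGen_iff_eqvGen_rewriteStep {x y : M} :
    conGen (fun x y => x = l ∧ y = r) x y ↔ EqvGen (RewriteStep l r) x y := by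
  constructor
  · intro h
    induction h with
    | of x y h => exact .rel _ _ ⟨1, 1, by simp [h.1], by simp [h.2]⟩
    | refl x => exact .refl _
    | symm _ ih => exact .symm _ _ ih
    | trans _ _ ihxy ihyz => exact .trans _ _ _ ihxy ihyz
    | @mul w x y z _ _ ihwx ihyz =>
      have hl := eqvGen_rewriteStep_mul_mul ihwx 1 y
      have hr := eqvGen_rewriteStep_mul_mul ihyz x 1
      simp only [one_mul, mul_one] at hl hr
      exact .trans _ _ _ hl hr
  · intro h
    induction h with
    | rel x y h =>
      obtain ⟨s, t, rfl, rfl⟩ := h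
      exact (conGen _).mul ((conGen _).mul ((conGen _).refl s) (ConGen.Rel.of _ _ ⟨rfl, rfl⟩))
        ((conGen _).refl t)
    | refl x => exact (conGen _).refl x
    | symm x y _ ih => exact (conGen _).symm ih
    | trans x y z _ _ ihxy ihyz => exact (conGen _).trans ihxy ihyz

end Rewriting

theorem Relation.reflTransGen_of_eqvGen_of_irreducible {α : Type*} {r : α → α → Prop}
    (hcr : ∀ a b c, r a b → r a c → ∃ d, ReflGen r b d ∧ ReflTransGen r c d) {x y : α}
    (hx : ∀ z, ¬ r x z) (h : EqvGen r x y) : ReflTransGen r y x := by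
  obtain ⟨d, hxd, hyd⟩ := (equivalence_join_reflTransGen hcr).eqvGen_iff.1
    (EqvGen.mono (fun a b hab => ⟨b, .single hab, .refl⟩) _ _ h)
  rcases hxd.cases_head with rfl | ⟨z, hxz, -⟩
  · exact hyd
  · exact absurd hxz (hx z)

namespace FreeMonoid

variable {α : Type*}

theorem mul_eq_mul_iff {a b c d : FreeMonoid α} :
    a * b = c * d ↔ (∃ m, c = a * m ∧ b = m * d) ∨ ∃ m, a = c * m ∧ d = m * b :=
  List.append_eq_append_iff

def Unbordered (w : FreeMonoid α) : Prop :=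
  ∀ u x y : FreeMonoid α, u * x = w → y * u = w → u = 1 ∨ u = w

variable {w : FreeMonoid α}

theorem Unbordered.eq_one_and_eq_or_of_mul_eq {t t' m : FreeMonoid α} (hw : w.Unbordered)
    (h : w * t = m * (w * t')) : (m = 1 ∧ t = t') ∨ ∃ p, m = w * p ∧ t = p * w * t' := by
  rcases mul_eq_mul_iff.1 h with ⟨p, rfl, rfl⟩ | ⟨p, hmp, hp⟩
  · exact Or.inr ⟨p, rfl, by rw [mul_assoc]⟩
  rcases mul_eq_mul_iff.1 hp with ⟨q, rfl, rfl⟩ | ⟨q, hpq, rfl⟩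
  · have := congrArg length hmp
    simp only [length_mul] at this
    have hm : m = 1 := length_eq_zero.1 (by omega)
    have hq : q = 1 := length_eq_zero.1 (by omega)
    subst hm hq
    simp
  -- `p` is both a prefix and a suffix of `w`
  rcases hw p q m hpq.symm hmp.symm with rfl | rfl
  · rw [mul_one] at hmp
    rw [one_mul] at hpq
    subst hmp hpq
    exact Or.inr ⟨1, by simp, by simp⟩
  · have hm : m = 1 := by simpa using hmp
    have hq : q = 1 := by simpa using hpq
    simp [hm, hq]

theorem Unbordered.rewriteStep_joinable_of_mul_eq {v s t t' m : FreeMonoid α}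
    (hw : w.Unbordered) (h : w * t = m * (w * t')) :
    ∃ d, ReflGen (RewriteStep w v) (s * v * t) d ∧
      ReflGen (RewriteStep w v) (s * m * v * t') d := by
  rcases hw.eq_one_and_eq_or_of_mul_eq h with ⟨rfl, rfl⟩ | ⟨p, rfl, rfl⟩
  · exact ⟨s * v * t, .refl, by rw [mul_one]⟩
  refine ⟨s * v * p * v * t', .single ⟨s * v * p, t', ?_, rfl⟩,
    .single ⟨s, p * v * t', ?_, ?_⟩⟩ <;> simp only [mul_assoc]

theorem Unbordered.rewriteStep_joinable {v x y z : FreeMonoid α} (hw : w.Unbordered)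
    (hy : RewriteStep w v x y) (hz : RewriteStep w v x z) :
    ∃ d, ReflGen (RewriteStep w v) y d ∧ ReflGen (RewriteStep w v) z d := by
  obtain ⟨s, t, rfl, rfl⟩ := hy
  obtain ⟨s', t', hx, rfl⟩ := hz
  simp only [mul_assoc] at hx
  rcases mul_eq_mul_iff.1 hx with ⟨m, rfl, h⟩ | ⟨m, rfl, h⟩
  · exact hw.rewriteStep_joinable_of_mul_eq h
  · obtain ⟨d, hz, hy⟩ := hw.rewriteStep_joinable_of_mul_eq h
    exact ⟨d, hy, hz⟩

theorem toList_of_pow (a : α) (n : ℕ) : toList (of a ^ n) = List.replicate n a := by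
  induction n with
  | zero => rfl
  | succ n ih => rw [pow_succ, toList_mul, ih, toList_of, List.replicate_succ']

theorem unbordered_of_forall_exists_getElem?_ne
    (h : ∀ m, 0 < m → m < w.length →
      ∃ i < m, w.toList[i]? ≠ w.toList[w.length - m + i]?) :
    w.Unbordered := by
  intro u x y hux hyu
  by_contra! hu
  have hux' := congrArg length hux
  have hyu' := congrArg length hyu
  simp only [length_mul] at hux' hyu'
  have hu0 : 0 < u.length := Nat.pos_of_ne_zero (mt length_eq_zero.1 hu.1)
  have hx0 : 0 < x.length :=
    Nat.pos_of_ne_zero fun h => hu.2 (by rw [← hux, length_eq_zero.1 h, mul_one])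
  obtain ⟨i, hi, hne⟩ := h u.length hu0 (by omega)
  rw [show w.length - u.length = y.length by omega] at hne
  apply hne
  calc w.toList[i]? = u.toList[i]? := by rw [← hux, toList_mul, List.getElem?_append_left hi]
    _ = w.toList[y.length + i]? := by
      rw [← hyu, toList_mul]
      change _ = (y.toList ++ u.toList)[y.toList.length + i]?
      rw [List.getElem?_append_right (Nat.le_add_right _ _), Nat.add_sub_cancel_left]

theorem unbordered_of_pow_mul_of_mul_of_mul_of_pow {a b : α} (hab : a ≠ b) {n : ℕ}
    (hn : 1 < n) :
    (of a ^ n * of b * of a * of b ^ n).Unbordered := by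
  set L := List.replicate n a ++ b :: a :: List.replicate n b
  have hw : (of a ^ n * of b * of a * of b ^ n).toList = L := by simp [L, toList_of_pow]
  have hlen : (of a ^ n * of b * of a * of b ^ n).length = 2 * n + 2 := by
    rw [length, hw]
    simp only [L, List.length_append, List.length_replicate, List.length_cons]
    omega
  have ha : ∀ i < n, L[i]? = some a := fun i hi => by
    rw [List.getElem?_append_left (by simpa), List.getElem?_replicate_of_lt hi]
  have hb : ∀ i, i = n ∨ n + 2 ≤ i → i < 2 * n + 2 → L[i]? = some b := by
    intro i hi hi'
    rw [List.getElem?_append_right (by simp; omega), List.length_replicate]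
    rcases hi with rfl | hi
    · simp
    · obtain ⟨k, rfl⟩ : ∃ k, i = n + 2 + k := ⟨i - (n + 2), by omega⟩
      rw [show n + 2 + k - n = k + 2 by omega]
      simp [List.getElem?_replicate_of_lt (show k < n by omega)]
  have hne : some a ≠ some b := by simpa using hab
  refine unbordered_of_forall_exists_getElem?_ne fun m hm0 hm => ?_
  rw [hw, hlen]
  rw [hlen] at hm
  rcases lt_trichotomy m (n + 1) with h | rfl | h
  · exact ⟨0, hm0, by rw [ha 0 (by omega), hb _ (by omega) (by omega)]; exact hne⟩
  · exact ⟨1, by omega, by rw [ha 1 hn, hb _ (by omega) (by omega)]; exact hne⟩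
  · refine ⟨m - n - 2, by omega, ?_⟩
    rw [ha _ (by omega), hb _ (by omega) (by omega)]
    exact hne

end FreeMonoid

section Length

open FreeMonoid

variable {α : Type*} {l r x y : FreeMonoid α}

theorem RewriteStep.length_lt (hlr : r.length < l.length) (h : RewriteStep l r x y) :
    y.length < x.length := by
  obtain ⟨s, t, rfl, rfl⟩ := h
  simp only [length_mul]
  omega

theorem not_rewriteStep_of_length_lt (hx : x.length < l.length) : ¬ RewriteStep l r x y := by
  rintro ⟨s, t, rfl, -⟩
  simp only [length_mul] at hx
  omega

theorem eq_or_length_lt_of_reflTransGen_rewriteStep (hlr : r.length < l.length)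
    (h : ReflTransGen (RewriteStep l r) x y) : x = y ∨ y.length < x.length := by
  induction h with
  | refl => exact .inl rfl
  | tail _ hyz ih =>
    have := hyz.length_lt hlr
    rcases ih with rfl | ih <;> omega

end Length

/-- For `τ = aⁿbabⁿ`, `|v| < |τ|`: congruent words shorter than `τ` are equal iff
they have the same length. -/
theorem word_congruent_short_eq_iff_length {α : Type*} (a b : α) (hab : a ≠ b)
    (n : ℕ) (hn : 1 < n)
    (τ : FreeMonoid α)
    (hτ : τ = (FreeMonoid.of a) ^ n * FreeMonoid.of b * FreeMonoid.of a * (FreeMonoid.of b) ^ n)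
    (v : FreeMonoid α) (hv : v.length < τ.length)
    (t t' : FreeMonoid α) (htt' : (conGen (fun x y => x = τ ∧ y = v)) t t')
    (ht : t.length < τ.length) :
    t = t' ↔ t.length = t'.length := by
  have hunb : τ.Unbordered := hτ ▸ FreeMonoid.unbordered_of_pow_mul_of_mul_of_mul_of_pow hab hn
  have hcr : ∀ x y z, RewriteStep τ v x y → RewriteStep τ v x z →
      ∃ d, ReflGen (RewriteStep τ v) y d ∧ ReflTransGen (RewriteStep τ v) z d :=
    fun _ _ _ hy hz =>
      (hunb.rewriteStep_joinable hy hz).imp fun _ h => ⟨h.1, h.2.to_reflTransGen⟩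
  have ht't : ReflTransGen (RewriteStep τ v) t' t :=
    reflTransGen_of_eqvGen_of_irreducible hcr (fun _ => not_rewriteStep_of_length_lt ht)
      (conGen_iff_eqvGen_rewriteStep.1 htt')
  refine ⟨congrArg _, fun hlen => ?_⟩
  rcases eq_or_length_lt_of_reflTransGen_rewriteStep hv ht't with h | h
  · exact h.symm
  · omega
end

section
/- Let τ ∈ FreeMagma (Option α) be a tree with |τ| ≥ 2 and let v be a tree with |v| < |τ|. If t ~_{τ,v} t' and |t| < |τ|, then t = t' if and only if |t| = |t'|. -/
/-- The length of a tree: the number of leaves labeled by a letter of `α`. -/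
def treeLen {α : Type*} : FreeMagma (Option α) → ℕ
  | FreeMagma.of none => 0
  | FreeMagma.of (some _) => 1
  | FreeMagma.mul t₁ t₂ => treeLen t₁ + treeLen t₂

/-!
Reducing every occurrence of `τ` to `v` bottom-up gives a normal form `normalForm τ v`. It is
computed compositionally and sends `τ` and `v` (which is shorter than `τ`, hence already normal)
to the same tree, so it is constant on the classes of `~_{τ,v}`. It fixes every tree shorter
than `τ` and strictly shortens every tree it changes. So if `t ~ t'` with `|t| < |τ|`, then
`t = normalForm t = normalForm t'`, and when `|t'| = |t|` the tree `t'` cannot have been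
changed, whence `t = t'`.
-/

namespace FreeMagma

variable {β : Type*}

theorem length_left_lt_length_mul (a b : FreeMagma β) : a.length < (a * b).length :=
  Nat.lt_add_of_pos_right b.length_pos

theorem length_right_lt_length_mul (a b : FreeMagma β) : b.length < (a * b).length :=
  Nat.lt_add_of_pos_left a.length_pos

variable [DecidableEq β]

def normalForm (τ v : FreeMagma β) : FreeMagma β → FreeMagma β
  | of x => if of x = τ then v else of x
  | a * b => if normalForm τ v a * normalForm τ v b = τ then v
      else normalForm τ v a * normalForm τ v b

theorem normalForm_mul (τ v a b : FreeMagma β) :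
    normalForm τ v (a * b) = if normalForm τ v a * normalForm τ v b = τ then v
      else normalForm τ v a * normalForm τ v b := rfl

theorem normalForm_eq_self_of_length_lt (τ v : FreeMagma β) :
    ∀ t : FreeMagma β, t.length < τ.length → normalForm τ v t = t
  | of x, h => if_neg (by rintro rfl; exact h.false)
  | a * b, h => by
      rw [normalForm_mul,
        normalForm_eq_self_of_length_lt τ v a ((length_left_lt_length_mul a b).trans h),
        normalForm_eq_self_of_length_lt τ v b ((length_right_lt_length_mul a b).trans h),
        if_neg (by rintro rfl; exact h.false)]

theorem normalForm_self (τ v : FreeMagma β) : normalForm τ v τ = v := by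
  cases τ with
  | of x => exact if_pos rfl
  | mul a b =>
      rw [mul_eq, normalForm_mul,
        normalForm_eq_self_of_length_lt _ v a (length_left_lt_length_mul a b),
        normalForm_eq_self_of_length_lt _ v b (length_right_lt_length_mul a b), if_pos rfl]

def normalFormCon (τ v : FreeMagma β) : Con (FreeMagma β) where
  r x y := normalForm τ v x = normalForm τ v y
  iseqv := ⟨fun _ => rfl, Eq.symm, Eq.trans⟩
  mul' hab hcd := by simp only [normalForm_mul, hab, hcd]

theorem normalForm_eq_of_conGen {τ v : FreeMagma β} (hv : normalForm τ v v = v)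
    {t t' : FreeMagma β} (h : conGen (fun x y => x = τ ∧ y = v) t t') :
    normalForm τ v t = normalForm τ v t' := by
  refine (Con.conGen_le (r := fun x y => x = τ ∧ y = v) (c := normalFormCon τ v)).2 ?_ h
  rintro x y ⟨rfl, rfl⟩
  exact (normalForm_self x y).trans hv.symm

end FreeMagma

open FreeMagma

section TreeLength

variable {α : Type*}

theorem treeLen_mul (a b : FreeMagma (Option α)) : treeLen (a * b) = treeLen a + treeLen b :=
  rfl

variable [DecidableEq α]

theorem normalForm_eq_self_of_treeLen_lt (τ v : FreeMagma (Option α)) :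
    ∀ t : FreeMagma (Option α), treeLen t < treeLen τ → normalForm τ v t = t
  | of x, h => if_neg (by rintro rfl; exact h.false)
  | a * b, h => by
      rw [treeLen_mul] at h
      rw [normalForm_mul, normalForm_eq_self_of_treeLen_lt τ v a (by omega),
        normalForm_eq_self_of_treeLen_lt τ v b (by omega),
        if_neg (by rintro rfl; rw [treeLen_mul] at h; omega)]

theorem normalForm_eq_self_or_treeLen_lt {τ v : FreeMagma (Option α)}
    (hv : treeLen v < treeLen τ) :
    ∀ t : FreeMagma (Option α), normalForm τ v t = t ∨ treeLen (normalForm τ v t) < treeLen t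
  | of x => by
      by_cases hx : of x = τ
      · exact .inr (by rw [normalForm, if_pos hx, hx]; exact hv)
      · exact .inl (if_neg hx)
  | a * b => by
      have ha := normalForm_eq_self_or_treeLen_lt hv a
      have hb := normalForm_eq_self_or_treeLen_lt hv b
      have ha_le : treeLen (normalForm τ v a) ≤ treeLen a := ha.elim (fun h => by rw [h]) le_of_lt
      have hb_le : treeLen (normalForm τ v b) ≤ treeLen b := hb.elim (fun h => by rw [h]) le_of_lt
      rw [normalForm_mul]
      split_ifs with hτ
      · refine .inr (hv.trans_le ?_)
        rw [← hτ, treeLen_mul, treeLen_mul]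
        omega
      · rcases ha with ha | ha
        · rcases hb with hb | hb
          · exact .inl (by rw [ha, hb])
          · exact .inr (by rw [treeLen_mul, treeLen_mul]; omega)
        · exact .inr (by rw [treeLen_mul, treeLen_mul]; omega)

end TreeLength

theorem tree_congruent_short_eq_iff_length_general {α : Type*}
    (τ : FreeMagma (Option α))
    (v : FreeMagma (Option α)) (hv : treeLen v < treeLen τ)
    (t t' : FreeMagma (Option α)) (htt' : (conGen (fun x y => x = τ ∧ y = v)) t t')
    (ht : treeLen t < treeLen τ) :
    t = t' ↔ treeLen t = treeLen t' := by
  classical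
  refine ⟨congrArg treeLen, fun hlen => ?_⟩
  have hnf : t = normalForm τ v t' := by
    rw [← normalForm_eq_of_conGen (normalForm_eq_self_of_treeLen_lt τ v v hv) htt',
      normalForm_eq_self_of_treeLen_lt τ v t ht]
  rcases normalForm_eq_self_or_treeLen_lt hv t' with hfix | hshort
  · rwa [hfix] at hnf
  · rw [← hnf] at hshort
    omega

/-- For a tree `τ` with `|τ| ≥ 2`, `|v| < |τ|`: congruent trees shorter than `τ` are
equal iff they have the same length. -/
theorem tree_congruent_short_eq_iff_length {α : Type*}
    (τ : FreeMagma (Option α)) (hτ : 2 ≤ treeLen τ)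
    (v : FreeMagma (Option α)) (hv : treeLen v < treeLen τ)
    (t t' : FreeMagma (Option α)) (htt' : (conGen (fun x y => x = τ ∧ y = v)) t t')
    (ht : treeLen t < treeLen τ) :
    t = t' ↔ treeLen t = treeLen t' :=
  tree_congruent_short_eq_iff_length_general τ v hv t t' htt' ht
end

section
/- Let p ≥ 2. The commutative monoid ℕ^p is affine complete: for every n and every congruence preserving function f : (Fin n → (Fin p → ℕ)) → (Fin p → ℕ) there exist c : Fin p → ℕ and k : Fin n → ℕ such that for all u, f u = c + ∑_i k i • u i. -/
/-!
The kernel of the projection `x ↦ x a` shows that `f u a` depends only on the `a`-th coordinates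
of the inputs, say `f u a = g_a (fun i => u i a)`. For `a ≠ b`, the kernel of the integer-valued
`x ↦ x a - x b` gives `g_a (x + t) - g_b (y + t) = g_a x - g_b y`. Hence
`coordIncrement f a = g_a - g_a 0` is the same additive map `ℕ^n → ℤ` for every `a`, i.e.
`x ↦ ∑ i, k i * x i`, and `k i ≥ 0` because `g_a (N • single i 1) ≥ 0` for every `N`.
-/

/-- `f` is congruence preserving on the additive monoid `ℕ^p`. -/
def IsAddCP {p n : ℕ} (f : (Fin n → (Fin p → ℕ)) → (Fin p → ℕ)) : Prop :=
  ∀ c : AddCon (Fin p → ℕ), ∀ u v : Fin n → (Fin p → ℕ),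
    (∀ i, c (u i) (v i)) → c (f u) (f v)

theorem AddMonoidHom.apply_eq_sum_nsmul_single {ι M : Type*} [Fintype ι] [DecidableEq ι]
    [AddCommMonoid M] (G : (ι → ℕ) →+ M) (x : ι → ℕ) :
    G x = ∑ i, x i • G (Pi.single i 1) := by
  conv_lhs => rw [← Finset.univ_sum_single x]
  simp only [map_sum, ← map_nsmul, ← Pi.single_smul', smul_eq_mul, mul_one]

theorem Int.nonneg_of_forall_le_natCast_mul {c k : ℤ} (h : ∀ N : ℕ, c ≤ N * k) : 0 ≤ k := by
  by_contra! hk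
  have := h (c.natAbs + 1)
  push_cast at this
  nlinarith [abs_nonneg c, neg_abs_le c]

def coordIncrement {p n : ℕ} (f : (Fin n → (Fin p → ℕ)) → (Fin p → ℕ)) (a : Fin p)
    (x : Fin n → ℕ) : ℤ :=
  f (fun i => Pi.single a (x i)) a - f 0 a

@[simp]
theorem coordIncrement_zero {p n : ℕ} (f : (Fin n → (Fin p → ℕ)) → (Fin p → ℕ)) (a : Fin p) :
    coordIncrement f a 0 = 0 := by
  simp only [coordIncrement, Pi.zero_apply, Pi.single_zero]
  exact sub_self _

namespace IsAddCP

variable {p n : ℕ} {f : (Fin n → (Fin p → ℕ)) → (Fin p → ℕ)}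

theorem map_eq {M : Type*} [AddZeroClass M] (hf : IsAddCP f) (φ : (Fin p → ℕ) →+ M)
    {u v : Fin n → Fin p → ℕ} (h : ∀ i, φ (u i) = φ (v i)) : φ (f u) = φ (f v) :=
  (AddCon.ker_rel φ).1 <| hf (AddCon.ker φ) u v fun i => (AddCon.ker_rel φ).2 (h i)

theorem apply_eq_of_forall_apply_eq (hf : IsAddCP f) {a : Fin p} {u v : Fin n → Fin p → ℕ}
    (h : ∀ i, u i a = v i a) : f u a = f v a :=
  hf.map_eq (Pi.evalAddMonoidHom _ a) h

theorem sub_eq_of_forall_sub_eq (hf : IsAddCP f) {a b : Fin p} {u v : Fin n → Fin p → ℕ}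
    (h : ∀ i, (u i a : ℤ) - u i b = v i a - v i b) : (f u a : ℤ) - f u b = f v a - f v b :=
  let φ : (Fin p → ℕ) →+ ℤ :=
    (Nat.castAddMonoidHom ℤ).comp (Pi.evalAddMonoidHom _ a) -
      (Nat.castAddMonoidHom ℤ).comp (Pi.evalAddMonoidHom _ b)
  hf.map_eq φ h

theorem apply_eq_apply_single (hf : IsAddCP f) (u : Fin n → Fin p → ℕ) (a : Fin p) :
    f u a = f (fun i => Pi.single a (u i a)) a :=
  hf.apply_eq_of_forall_apply_eq fun i => by simp

theorem coordIncrement_add_sub_coordIncrement_add (hf : IsAddCP f) {a b : Fin p} (hab : a ≠ b)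
    (x y t : Fin n → ℕ) :
    coordIncrement f a (x + t) - coordIncrement f b (y + t) =
      coordIncrement f a x - coordIncrement f b y := by
  set u : Fin n → Fin p → ℕ := fun i => Pi.single a ((x + t) i) + Pi.single b ((y + t) i)
  set v : Fin n → Fin p → ℕ := fun i => Pi.single a (x i) + Pi.single b (y i)
  have hcong := hf.sub_eq_of_forall_sub_eq (a := a) (b := b) (u := u) (v := v)
    fun i => by simp [u, v, hab, hab.symm]
  rw [hf.apply_eq_apply_single u, hf.apply_eq_apply_single u b, hf.apply_eq_apply_single v,
    hf.apply_eq_apply_single v b] at hcong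
  simp only [u, v, Pi.add_apply, Pi.single_eq_same, Pi.single_eq_of_ne hab,
    Pi.single_eq_of_ne hab.symm, add_zero, zero_add] at hcong
  simp only [coordIncrement, Pi.add_apply]
  linarith

theorem coordIncrement_eq (hf : IsAddCP f) (a b : Fin p) :
    coordIncrement f a = coordIncrement f b := by
  rcases eq_or_ne a b with rfl | hab
  · rfl
  funext t
  simpa [sub_eq_zero] using hf.coordIncrement_add_sub_coordIncrement_add hab 0 0 t

theorem coordIncrement_add [Nontrivial (Fin p)] (hf : IsAddCP f) (a : Fin p) (x t : Fin n → ℕ) :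
    coordIncrement f a (x + t) = coordIncrement f a x + coordIncrement f a t := by
  obtain ⟨b, hba⟩ := exists_ne a
  have := hf.coordIncrement_add_sub_coordIncrement_add hba.symm x 0 t
  rw [hf.coordIncrement_eq b a] at this
  simp only [zero_add, coordIncrement_zero, sub_zero] at this
  linarith

theorem coordIncrement_eq_sum [Nontrivial (Fin p)] (hf : IsAddCP f) (a : Fin p) (x : Fin n → ℕ) :
    coordIncrement f a x = ∑ i, x i * coordIncrement f a (Pi.single i 1) := by
  simpa using (AddMonoidHom.mk' _ (hf.coordIncrement_add a)).apply_eq_sum_nsmul_single x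

theorem coordIncrement_single_nonneg [Nontrivial (Fin p)] (hf : IsAddCP f) (a : Fin p)
    (i : Fin n) : 0 ≤ coordIncrement f a (Pi.single i 1) := by
  refine Int.nonneg_of_forall_le_natCast_mul (c := -f 0 a) fun N => ?_
  have h := hf.coordIncrement_eq_sum a (Pi.single i N)
  simp only [Pi.single_apply, Nat.cast_ite, Nat.cast_zero, ite_mul, zero_mul,
    Finset.sum_ite_eq', Finset.mem_univ, if_true] at h
  rw [← h, coordIncrement]
  omega

theorem coe_apply_eq_add_sum [Nontrivial (Fin p)] (hf : IsAddCP f) (u : Fin n → Fin p → ℕ)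
    (a b : Fin p) : (f u a : ℤ) = f 0 a + ∑ i, coordIncrement f b (Pi.single i 1) * u i a := by
  have h := hf.coordIncrement_eq_sum a (fun i => u i a)
  rw [coordIncrement, ← hf.apply_eq_apply_single, hf.coordIncrement_eq a b] at h
  simp only [mul_comm _ (u _ a : ℤ), ← h, add_sub_cancel]

end IsAddCP

/-- The free commutative monoid `ℕ^p` with `p ≥ 2` is affine complete. -/
theorem nat_pow_affineComplete {p : ℕ} (hp : 2 ≤ p) (n : ℕ)
    (f : (Fin n → (Fin p → ℕ)) → (Fin p → ℕ)) (hf : IsAddCP f) :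
    ∃ (c : Fin p → ℕ) (k : Fin n → ℕ), ∀ u : Fin n → (Fin p → ℕ),
      f u = c + ∑ i, k i • u i := by
  have : Nontrivial (Fin p) := Fin.nontrivial_iff_two_le.mpr hp
  let a₀ : Fin p := ⟨0, by omega⟩
  let k (i : Fin n) : ℤ := coordIncrement f a₀ (Pi.single i 1)
  have hk (i : Fin n) : ((k i).toNat : ℤ) = k i :=
    Int.toNat_of_nonneg (hf.coordIncrement_single_nonneg a₀ i)
  refine ⟨f 0, fun i => (k i).toNat, fun u => funext fun a => ?_⟩
  simp only [Pi.add_apply, Finset.sum_apply, Pi.smul_apply, smul_eq_mul]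
  zify
  simpa only [hk] using hf.coe_apply_eq_add_sum u a a₀
end
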